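/- arXiv:1804.07109 — 7 statements merged into one kernel-verified Lean document; each statement's English description precedes it below -/
import Mathlib

section
/- Let S and T be the 6×6 matrices over ℤ/4ℤ with rows S = ((1,0,0,0,2,1),(0,1,0,0,2,3),(0,0,1,0,0,3),(0,0,0,1,1,1),(0,0,0,0,3,2),(0,0,0,0,0,3)) and T = ((1,0,0,0,3,0),(2,1,0,0,1,3),(2,0,3,0,3,0),(3,0,3,1,1,3),(0,0,0,0,3,0),(0,0,0,0,2,3)). Then S and T are invertible, S has order 4, T has order 2, T·S·T = S³, and the subgroup of GL₆(ℤ/4ℤ) generated by S and T has exactly 8 elements and is isomorphic to the dihedral group of order 8. -/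
open DihedralGroup in
private theorem dihedral_aux {G : Type*} [Group G] (a b : G)
    (ha : orderOf a = 4) (hrel : b * a * b = a ^ 3) (hb2 : b * b = 1)
    (hdist : ∀ k, k < 4 → a ^ k ≠ b) :
    Nat.card (Subgroup.closure ({a, b} : Set G)) = 8 ∧
      Nonempty ((Subgroup.closure ({a, b} : Set G)) ≃* DihedralGroup 4) := by
  have ha4 : a ^ 4 = 1 := by rw [← ha]; exact pow_orderOf_eq_one a
  have hpow : ∀ m : ℕ, a ^ m = a ^ (m % 4) := by
    intro m; rw [← ha]; exact (pow_mod_orderOf a m).symm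
  have hab : a * b = b * a ^ 3 := by
    have h1 : b * a = a ^ 3 * b := by
      have := congrArg (· * b) hrel
      simpa [mul_assoc, hb2] using this
    calc a * b = b * (b * a) * b := by rw [← mul_assoc, hb2, one_mul]
    _ = b * (a ^ 3 * b) * b := by rw [h1]
    _ = b * a ^ 3 := by rw [mul_assoc, mul_assoc, hb2, mul_one]
  have hcomm : ∀ m : ℕ, a ^ m * b = b * a ^ (3 * m) := by
    intro m; induction m with
    | zero => simp
    | succ k ih =>
      rw [pow_succ, mul_assoc, hab, ← mul_assoc, ih, mul_assoc, ← pow_add]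
      have : 3 * k + 3 = 3 * (k + 1) := by ring
      rw [this]
  have hval : ∀ m : ℕ, a ^ m = a ^ ((m : ZMod 4)).val := by
    intro m; rw [hpow, ZMod.val_natCast]
  have hAadd : ∀ i j : ZMod 4, a ^ (i + j).val = a ^ i.val * a ^ j.val := by
    intro i j; rw [← pow_add, hpow (i.val + j.val), ZMod.val_add]
  have hAcomm : ∀ i : ZMod 4, a ^ i.val * b = b * a ^ (3 * i).val := by
    intro i
    rw [hcomm]
    congr 1
    rw [hval (3 * i.val)]
    congr 2
  have hsub : ∀ i j : ZMod 4, j - i = 3 * i + j := by decide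
  let f : DihedralGroup 4 → G := fun x => match x with
    | .r i => a ^ i.val
    | .sr i => b * a ^ i.val
  have hmul : ∀ x y, f (x * y) = f x * f y := by
    rintro (i | i) (j | j)
    · exact hAadd i j
    · show b * a ^ (j - i).val = a ^ i.val * (b * a ^ j.val)
      rw [hsub i j, ← mul_assoc, hAcomm i, mul_assoc, ← hAadd]
    · show b * a ^ (i + j).val = (b * a ^ i.val) * a ^ j.val
      rw [hAadd, mul_assoc]
    · show a ^ (j - i).val = (b * a ^ i.val) * (b * a ^ j.val)
      rw [hsub i j, hAadd, ← mul_assoc, mul_assoc b _ b, hAcomm i, ← mul_assoc, hb2, one_mul]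
  let φ : DihedralGroup 4 →* G := MonoidHom.mk' f hmul
  have hAinj : ∀ i j : ZMod 4, a ^ i.val = a ^ j.val → i = j := by
    intro i j h
    rw [pow_eq_pow_iff_modEq, ha] at h
    have h' : i.val % 4 = j.val % 4 := h
    rw [Nat.mod_eq_of_lt (ZMod.val_lt i), Nat.mod_eq_of_lt (ZMod.val_lt j)] at h'
    have := congrArg (Nat.cast : ℕ → ZMod 4) h'
    simpa [ZMod.natCast_val, ZMod.cast_id] using this
  have hAneg : ∀ j : ZMod 4, a ^ (-j).val = (a ^ j.val)⁻¹ := by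
    intro j
    apply eq_inv_of_mul_eq_one_left
    rw [← hAadd, neg_add_cancel]
    norm_num [ZMod.val_zero]
  have hbne : ∀ i : ZMod 4, a ^ i.val ≠ b := fun i => hdist i.val (ZMod.val_lt i)
  have hinj : Function.Injective φ := by
    rintro (i | i) (j | j) h
    · rw [hAinj i j h]
    · exfalso
      apply hbne (i - j)
      have h' : a ^ i.val = b * a ^ j.val := h
      rw [sub_eq_add_neg, hAadd, hAneg, h', mul_assoc, mul_inv_cancel, mul_one]
    · exfalso
      apply hbne (j - i)
      have h' : b * a ^ i.val = a ^ j.val := h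
      rw [sub_eq_add_neg, hAadd, hAneg, ← h', mul_assoc, mul_inv_cancel, mul_one]
    · have h' : b * a ^ i.val = b * a ^ j.val := h
      rw [hAinj i j (mul_left_cancel h')]
  have hr1 : φ (r 1) = a := by
    show a ^ (1 : ZMod 4).val = a
    rw [show (1 : ZMod 4).val = 1 from rfl, pow_one]
  have hsr0 : φ (sr 0) = b := by
    show b * a ^ (0 : ZMod 4).val = b
    norm_num [ZMod.val_zero]
  have hgen : Subgroup.closure ({r 1, sr 0} : Set (DihedralGroup 4)) = ⊤ := by
    rw [eq_top_iff]
    rintro (i | i) -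
    · have : (r i : DihedralGroup 4) = (r 1) ^ i.val := by
        rw [r_one_pow]; congr 1; simp [ZMod.natCast_val, ZMod.cast_id]
      rw [this]
      exact pow_mem (Subgroup.subset_closure (by simp)) _
    · have : (sr i : DihedralGroup 4) = sr 0 * (r 1) ^ i.val := by
        rw [r_one_pow, sr_mul_r, zero_add]; congr 1; simp [ZMod.natCast_val, ZMod.cast_id]
      rw [this]
      exact mul_mem (Subgroup.subset_closure (by simp))
        (pow_mem (Subgroup.subset_closure (by simp)) _)
  have hrange : φ.range = Subgroup.closure ({a, b} : Set G) := by
    rw [MonoidHom.range_eq_map, ← hgen, MonoidHom.map_closure, Set.image_pair, hr1, hsr0]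
  have e : DihedralGroup 4 ≃* Subgroup.closure ({a, b} : Set G) :=
    (MonoidHom.ofInjective hinj).trans (MulEquiv.subgroupCongr hrange)
  refine ⟨?_, ⟨e.symm⟩⟩
  rw [← Nat.card_congr e.toEquiv, DihedralGroup.nat_card]


private def Sm : Matrix (Fin 6) (Fin 6) (ZMod 4) :=
  !![1,0,0,0,2,1; 0,1,0,0,2,3; 0,0,1,0,0,3; 0,0,0,1,1,1; 0,0,0,0,3,2; 0,0,0,0,0,3]

private def Tm : Matrix (Fin 6) (Fin 6) (ZMod 4) :=
  !![1,0,0,0,3,0; 2,1,0,0,1,3; 2,0,3,0,3,0; 3,0,3,1,1,3; 0,0,0,0,3,0; 0,0,0,0,2,3]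

set_option maxHeartbeats 1000000 in
private lemma hSm4 : Sm ^ 4 = 1 := by decide

set_option maxHeartbeats 1000000 in
private lemma hSm2 : Sm ^ 2 ≠ 1 := by decide

set_option maxHeartbeats 1000000 in
private lemma hTm2 : Tm * Tm = 1 := by decide

set_option maxHeartbeats 1000000 in
private lemma hTmne : Tm ≠ 1 := by decide

set_option maxHeartbeats 1000000 in
private lemma hrelm : Tm * Sm * Tm = Sm ^ 3 := by decide

set_option maxHeartbeats 1000000 in
private lemma hdm : ∀ k, k < 4 → Sm ^ k ≠ Tm := by decide

set_option maxHeartbeats 2000000 in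
/-- The matrices `S`, `T` over `ℤ/4ℤ` representing the mod 4 Galois
representation of the Fermat quartic are invertible, `S` has order 4, `T` has
order 2, `T·S·T = S³`, and the subgroup of `GL₆(ℤ/4ℤ)` they generate has
exactly 8 elements and is isomorphic to the dihedral group of order 8. -/
theorem mod_four_galois_image_dihedral
    (S T : Matrix (Fin 6) (Fin 6) (ZMod 4))
    (hS : S = !![1,0,0,0,2,1; 0,1,0,0,2,3; 0,0,1,0,0,3;
                 0,0,0,1,1,1; 0,0,0,0,3,2; 0,0,0,0,0,3])
    (hT : T = !![1,0,0,0,3,0; 2,1,0,0,1,3; 2,0,3,0,3,0;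
                 3,0,3,1,1,3; 0,0,0,0,3,0; 0,0,0,0,2,3]) :
    IsUnit S ∧ IsUnit T ∧ orderOf S = 4 ∧ orderOf T = 2 ∧ T * S * T = S ^ 3 ∧
      ∀ S' T' : GL (Fin 6) (ZMod 4),
        (S' : Matrix (Fin 6) (Fin 6) (ZMod 4)) = S →
        (T' : Matrix (Fin 6) (Fin 6) (ZMod 4)) = T →
        Nat.card (Subgroup.closure ({S', T'} : Set (GL (Fin 6) (ZMod 4)))) = 8 ∧
        Nonempty ((Subgroup.closure ({S', T'} : Set (GL (Fin 6) (ZMod 4)))) ≃*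
          DihedralGroup 4) := by
  have hSm : S = Sm := hS
  have hTm : T = Tm := hT
  subst hSm
  subst hTm
  clear hS hT
  have hordS : orderOf Sm = 4 := by
    have h2 : ¬ Sm ^ 2 ^ 1 = 1 := hSm2
    have h4 : Sm ^ 2 ^ 2 = 1 := hSm4
    have := orderOf_eq_prime_pow h2 h4
    rwa [show (2 : ℕ) ^ (1 + 1) = 4 from rfl] at this
  have hordT : orderOf Tm = 2 := by
    apply orderOf_eq_prime
    · rw [pow_two]; decide
    · exact hTmne
  refine ⟨⟨⟨Sm, Sm ^ 3, by decide, by decide⟩, rfl⟩,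
    ⟨⟨Tm, Tm, by decide, by decide⟩, rfl⟩, hordS, hordT, hrelm, ?_⟩
  intro S' T' hS' hT'
  have hvS : ∀ k : ℕ, ((S' ^ k : GL (Fin 6) (ZMod 4)) : Matrix (Fin 6) (Fin 6) (ZMod 4))
      = Sm ^ k := by
    intro k; rw [Units.val_pow_eq_pow_val, hS']
  have hordS' : orderOf S' = 4 := by rw [← orderOf_units, hS', hordS]
  have hrel : T' * S' * T' = S' ^ 3 := by
    apply Units.ext
    rw [Units.val_mul, Units.val_mul, hvS, hS', hT']
    decide
  have hb2 : T' * T' = 1 := by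
    apply Units.ext
    rw [Units.val_mul, hT', Units.val_one]
    decide
  have hdist : ∀ k, k < 4 → S' ^ k ≠ T' := by
    intro k hk h
    exact hdm k hk (by rw [← hvS, h, hT'])
  exact dihedral_aux S' T' hordS' hrel hb2 hdist
end

section
/- Let S be the 6×6 matrix over ℤ/4ℤ with rows ((1,0,0,0,2,1),(0,1,0,0,2,3),(0,0,1,0,0,3),(0,0,0,1,1,1),(0,0,0,0,3,2),(0,0,0,0,0,3)). Then S² equals the matrix with rows ((1,0,0,0,0,0),(0,1,0,0,0,0),(0,0,1,0,0,0),(0,0,0,1,0,2),(0,0,0,0,1,0),(0,0,0,0,0,1)), and the additive subgroup {v ∈ (ℤ/4ℤ)⁶ | S²·v = v} of (ℤ/4ℤ)⁶ is isomorphic as an abelian group to (ℤ/4ℤ)⁵ × ℤ/2ℤ; in particular it has exactly 2048 elements. -/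
private lemma vec6_val_five {α : Type*} (a b c d e f : α) : ![a,b,c,d,e,f] 5 = f := rfl

private lemma cv5 {α : Type*} (x : α) (u : Fin 5 → α) : Matrix.vecCons x u 5 = u 4 := rfl
private lemma cv4 {α : Type*} (x : α) (u : Fin 4 → α) : Matrix.vecCons x u 4 = u 3 := rfl
private lemma cv3 {α : Type*} (x : α) (u : Fin 3 → α) : Matrix.vecCons x u 3 = u 2 := rfl
private lemma cv2 {α : Type*} (x : α) (u : Fin 2 → α) : Matrix.vecCons x u 2 = u 1 := rfl

private def f4 : ZMod 4 → ZMod 2 := fun x => if x = 2 then 1 else 0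
private def g4 : ZMod 2 → ZMod 4 := fun b => if b = 1 then 2 else 0

private lemma f4g4 : ∀ b, f4 (g4 b) = b := by decide
private lemma g4f4 : ∀ x, 2 * x = 0 → g4 (f4 x) = x := by decide
private lemma g4zero : ∀ b, 2 * g4 b = 0 := by decide
private lemma f4add : ∀ x y, 2 * x = 0 → 2 * y = 0 → f4 (x + y) = f4 x + f4 y := by decide


/-- For the matrix `S` over `ℤ/4ℤ` giving the Galois action of `σ`, `S²` is the
stated matrix and the additive subgroup `{v | S²·v = v}` of `(ℤ/4ℤ)⁶` (the
Mordell–Weil group of the Jacobian of the Fermat quartic over `ℚ(ζ₈)`) is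
isomorphic to `(ℤ/4ℤ)⁵ × ℤ/2ℤ`; in particular it has 2048 elements. -/
theorem mordell_weil_fermat_quartic_QZeta8
    (S : Matrix (Fin 6) (Fin 6) (ZMod 4))
    (hS : S = !![1,0,0,0,2,1; 0,1,0,0,2,3; 0,0,1,0,0,3;
                 0,0,0,1,1,1; 0,0,0,0,3,2; 0,0,0,0,0,3]) :
    S ^ 2 = !![1,0,0,0,0,0; 0,1,0,0,0,0; 0,0,1,0,0,0;
               0,0,0,1,0,2; 0,0,0,0,1,0; 0,0,0,0,0,1] ∧
    ∀ G : AddSubgroup (Fin 6 → ZMod 4),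
      (∀ v, v ∈ G ↔ (S ^ 2).mulVec v = v) →
      Nonempty (G ≃+ ((Fin 5 → ZMod 4) × ZMod 2)) ∧ Nat.card G = 2048 := by
  subst hS
  have hsq : (!![1,0,0,0,2,1; 0,1,0,0,2,3; 0,0,1,0,0,3;
                 0,0,0,1,1,1; 0,0,0,0,3,2; 0,0,0,0,0,3] : Matrix (Fin 6) (Fin 6) (ZMod 4)) ^ 2
      = !![1,0,0,0,0,0; 0,1,0,0,0,0; 0,0,1,0,0,0;
               0,0,0,1,0,2; 0,0,0,0,1,0; 0,0,0,0,0,1] := by decide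
  refine ⟨hsq, ?_⟩
  intro G hG
  have hmem : ∀ v : Fin 6 → ZMod 4, v ∈ G ↔ 2 * v 5 = 0 := by
    intro v
    rw [hG, hsq]
    constructor
    · intro h
      have h3 := congrFun h 3
      simp [Matrix.mulVec, dotProduct, Fin.sum_univ_six, Matrix.cons_val_succ, vec6_val_five, cv5, cv4, cv3, cv2] at h3
      linear_combination h3
    · intro h
      funext i
      fin_cases i <;>
        set_option linter.unnecessarySeqFocus false in
        simp [Matrix.mulVec, dotProduct, Fin.sum_univ_six, Matrix.cons_val_succ, vec6_val_five, cv5, cv4, cv3, cv2] <;>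
        linear_combination h
  have e : G ≃+ ((Fin 5 → ZMod 4) × ZMod 2) :=
  { toFun := fun v => (fun i => v.1 i.castSucc, f4 (v.1 5))
    invFun := fun p => ⟨Fin.snoc p.1 (g4 p.2), (hmem _).2 (by
      have h5 : (5 : Fin 6) = Fin.last 5 := rfl
      rw [h5, Fin.snoc_last]; exact g4zero p.2)⟩
    left_inv := by
      rintro ⟨v, hv⟩
      ext i
      refine Fin.lastCases ?_ ?_ i
      · show (Fin.snoc (fun i => v i.castSucc) (g4 (f4 (v 5))) : Fin 6 → ZMod 4) (Fin.last 5) = v (Fin.last 5)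
        rw [Fin.snoc_last]
        exact g4f4 _ ((hmem v).1 hv)
      · intro j
        simp [Fin.snoc_castSucc]
    right_inv := by
      rintro ⟨w, b⟩
      refine Prod.ext ?_ ?_
      · funext i; simp [Fin.snoc_castSucc]
      · show f4 ((Fin.snoc w (g4 b) : Fin 6 → ZMod 4) (Fin.last 5)) = b
        rw [Fin.snoc_last]; exact f4g4 b
    map_add' := by
      rintro ⟨v, hv⟩ ⟨w, hw⟩
      refine Prod.ext ?_ ?_
      · rfl
      · exact f4add _ _ ((hmem v).1 hv) ((hmem w).1 hw) }
  refine ⟨⟨e⟩, ?_⟩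
  rw [Nat.card_congr e.toEquiv]
  simp only [Nat.card_eq_fintype_card, Fintype.card_prod, Fintype.card_fun, ZMod.card, Fintype.card_fin]
  norm_num
end

section
/- Let S and T be the 6×6 matrices over ℤ/4ℤ with rows S = ((1,0,0,0,2,1),(0,1,0,0,2,3),(0,0,1,0,0,3),(0,0,0,1,1,1),(0,0,0,0,3,2),(0,0,0,0,0,3)) and T = ((1,0,0,0,3,0),(2,1,0,0,1,3),(2,0,3,0,3,0),(3,0,3,1,1,3),(0,0,0,0,3,0),(0,0,0,0,2,3)). Then the additive subgroup {v ∈ (ℤ/4ℤ)⁶ | S·v = v and T·v = v} is isomorphic as an abelian group to (ℤ/4ℤ)² × ℤ/2ℤ; in particular it has exactly 32 elements. -/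
private theorem vec6_ext (v : Fin 6 → ZMod 4) : v = ![v 0, v 1, v 2, v 3, v 4, v 5] := by
  funext i; fin_cases i <;> rfl

set_option maxRecDepth 10000 in
set_option maxHeartbeats 4000000 in
private theorem mw_key : ∀ a b c d e f : ZMod 4,
    ((!![1,0,0,0,2,1; 0,1,0,0,2,3; 0,0,1,0,0,3;
        0,0,0,1,1,1; 0,0,0,0,3,2; 0,0,0,0,0,3] : Matrix (Fin 6) (Fin 6) (ZMod 4)).mulVec
        ![a,b,c,d,e,f] = ![a,b,c,d,e,f] ∧
     (!![1,0,0,0,3,0; 2,1,0,0,1,3; 2,0,3,0,3,0;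
        3,0,3,1,1,3; 0,0,0,0,3,0; 0,0,0,0,2,3] : Matrix (Fin 6) (Fin 6) (ZMod 4)).mulVec
        ![a,b,c,d,e,f] = ![a,b,c,d,e,f])
    ↔ (2*a = 0 ∧ c = a ∧ e = 0 ∧ f = 0) := by decide

/-- For the matrices `S`, `T` over `ℤ/4ℤ` giving the Galois action of `σ`, `τ`,
the additive subgroup `{v | S·v = v ∧ T·v = v}` of `(ℤ/4ℤ)⁶` (the Mordell–Weil
group of the Jacobian of the Fermat quartic over `ℚ`) is isomorphic to
`(ℤ/4ℤ)² × ℤ/2ℤ`; in particular it has 32 elements. -/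
theorem mordell_weil_fermat_quartic_Q
    (S T : Matrix (Fin 6) (Fin 6) (ZMod 4))
    (hS : S = !![1,0,0,0,2,1; 0,1,0,0,2,3; 0,0,1,0,0,3;
                 0,0,0,1,1,1; 0,0,0,0,3,2; 0,0,0,0,0,3])
    (hT : T = !![1,0,0,0,3,0; 2,1,0,0,1,3; 2,0,3,0,3,0;
                 3,0,3,1,1,3; 0,0,0,0,3,0; 0,0,0,0,2,3])
    (G : AddSubgroup (Fin 6 → ZMod 4))
    (hG : ∀ v, v ∈ G ↔ S.mulVec v = v ∧ T.mulVec v = v) :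
    Nonempty (G ≃+ ((Fin 2 → ZMod 4) × ZMod 2)) ∧ Nat.card G = 32 := by
  have hmem : ∀ v : Fin 6 → ZMod 4,
      v ∈ G ↔ (2 * v 0 = 0 ∧ v 2 = v 0 ∧ v 4 = 0 ∧ v 5 = 0) := by
    intro v
    rw [hG, hS, hT]
    have h := mw_key (v 0) (v 1) (v 2) (v 3) (v 4) (v 5)
    rwa [← vec6_ext v] at h
  have hzmod4 : ∀ a : ZMod 4, 2 * a = 0 → a = 0 ∨ a = 2 := by decide
  -- the equivalence
  have e : G ≃+ ((Fin 2 → ZMod 4) × ZMod 2) := by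
    refine
      { toFun := fun x => (![x.1 1, x.1 3], if x.1 0 = 0 then 0 else 1)
        invFun := fun p =>
          ⟨![if p.2 = 0 then 0 else 2, p.1 0, if p.2 = 0 then 0 else 2, p.1 1, 0, 0], ?_⟩
        left_inv := ?_
        right_inv := ?_
        map_add' := ?_ }
    · rw [hmem]
      refine ⟨?_, rfl, rfl, rfl⟩
      show 2 * (if p.2 = 0 then (0 : ZMod 4) else 2) = 0
      split <;> decide
    · rintro ⟨v, hv⟩
      rw [hmem] at hv
      obtain ⟨h0, h2, h4, h5⟩ := hv
      ext i
      fin_cases i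
      · show (if (if v 0 = 0 then (0 : ZMod 2) else 1) = 0 then (0 : ZMod 4) else 2) = v 0
        rcases hzmod4 _ h0 with h | h <;> rw [h] <;> decide
      · rfl
      · show (if (if v 0 = 0 then (0 : ZMod 2) else 1) = 0 then (0 : ZMod 4) else 2) = v 2
        rw [h2]
        rcases hzmod4 _ h0 with h | h <;> rw [h] <;> decide
      · rfl
      · exact h4.symm
      · exact h5.symm
    · rintro ⟨w, t⟩
      have ht : t = 0 ∨ t = 1 := by revert t; decide
      refine Prod.ext ?_ ?_
      · funext i; fin_cases i <;> rfl
      · show (if (if t = 0 then (0 : ZMod 4) else 2) = 0 then (0 : ZMod 2) else 1) = t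
        rcases ht with h | h <;> rw [h] <;> decide
    · rintro ⟨v, hv⟩ ⟨w, hw⟩
      rw [hmem] at hv hw
      refine Prod.ext ?_ ?_
      · funext i; fin_cases i <;> rfl
      · show (if v 0 + w 0 = 0 then (0 : ZMod 2) else 1)
            = (if v 0 = 0 then (0 : ZMod 2) else 1) + (if w 0 = 0 then 0 else 1)
        rcases hzmod4 _ hv.1 with h | h <;> rcases hzmod4 _ hw.1 with h' | h' <;>
          rw [h, h'] <;> decide
  refine ⟨⟨e⟩, ?_⟩
  rw [Nat.card_congr e.toEquiv]
  simp [Nat.card_eq_fintype_card]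
end

section
/- Let S be the 6×6 matrix over ℤ/4ℤ with rows ((1,0,0,0,2,1),(0,1,0,0,2,3),(0,0,1,0,0,3),(0,0,0,1,1,1),(0,0,0,0,3,2),(0,0,0,0,0,3)). Then the additive subgroup {v ∈ (ℤ/4ℤ)⁶ | S·v = v} is isomorphic as an abelian group to (ℤ/4ℤ)⁴; in particular it has exactly 256 elements. -/
/-- For the matrix `S` over `ℤ/4ℤ` giving the Galois action of `σ`, the
additive subgroup `{v | S·v = v}` of `(ℤ/4ℤ)⁶` (the Mordell–Weil group of the
Jacobian of the Fermat quartic over `ℚ(√−1)`) is isomorphic to `(ℤ/4ℤ)⁴`;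
in particular it has 256 elements. -/
theorem mordell_weil_fermat_quartic_Qi
    (S : Matrix (Fin 6) (Fin 6) (ZMod 4))
    (hS : S = !![1,0,0,0,2,1; 0,1,0,0,2,3; 0,0,1,0,0,3;
                 0,0,0,1,1,1; 0,0,0,0,3,2; 0,0,0,0,0,3])
    (G : AddSubgroup (Fin 6 → ZMod 4))
    (hG : ∀ v, v ∈ G ↔ S.mulVec v = v) :
    Nonempty (G ≃+ (Fin 4 → ZMod 4)) ∧ Nat.card G = 256 := by
  subst hS
  have c4 : ∀ {α : Type} (a b c d e f : α), ![a,b,c,d,e,f] 4 = e := fun _ _ _ _ _ _ => rfl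
  have c5 : ∀ {α : Type} (a b c d e f : α), ![a,b,c,d,e,f] 5 = f := fun _ _ _ _ _ _ => rfl
  have hmem : ∀ v : Fin 6 → ZMod 4, v ∈ G ↔ (v 4 = 0 ∧ v 5 = 0) := by
    intro v
    rw [hG]
    constructor
    · intro h
      have h2 := congrFun h 2
      have h3 := congrFun h 3
      simp [-Matrix.cons_val', Matrix.mulVec, dotProduct, Fin.sum_univ_six,
        c4, c5] at h2 h3
      have hv5 : v 5 = 0 :=
        (by decide : ∀ x : ZMod 4, 3 * x = 0 → x = 0) _ h2
      have hv4 : v 4 = 0 := by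
        rw [hv5, add_zero] at h3
        exact add_left_cancel (h3.trans (add_zero (v 3)).symm)
      exact ⟨hv4, hv5⟩
    · rintro ⟨h4, h5⟩
      funext j
      fin_cases j <;>
        simp [-Matrix.cons_val', Matrix.mulVec, dotProduct, Fin.sum_univ_six,
          c4, c5, h4, h5]
  have e : G ≃+ (Fin 4 → ZMod 4) :=
  { toFun := fun v i => v.1 (Fin.castLE (by norm_num) i)
    invFun := fun w => ⟨fun j => if h : (j : ℕ) < 4 then w ⟨j, h⟩ else 0, by
      rw [hmem]
      exact ⟨dif_neg (by decide), dif_neg (by decide)⟩⟩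
    left_inv := by
      rintro ⟨v, hv⟩
      rw [hmem] at hv
      ext j
      show (if h : ((j : Fin 6) : ℕ) < 4 then v (Fin.castLE (by norm_num) ⟨(j : ℕ), h⟩) else 0) = v j
      fin_cases j
      · exact dif_pos (by decide)
      · exact dif_pos (by decide)
      · exact dif_pos (by decide)
      · exact dif_pos (by decide)
      · exact (dif_neg (by decide)).trans hv.1.symm
      · exact (dif_neg (by decide)).trans hv.2.symm
    right_inv := by
      intro w
      funext i
      show (if h : ((Fin.castLE (by norm_num) i : Fin 6) : ℕ) < 4 then
          w ⟨((Fin.castLE (by norm_num) i : Fin 6) : ℕ), h⟩ else 0) = w i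
      exact (dif_pos i.isLt).trans (congrArg w (Fin.ext rfl))
    map_add' := by
      intro a b
      funext i
      rfl }
  refine ⟨⟨e⟩, ?_⟩
  rw [Nat.card_congr e.toEquiv]
  simp [Nat.card_eq_fintype_card]
end

section
/- Let S and T be the 6×6 matrices over ℤ/4ℤ with rows S = ((1,0,0,0,2,1),(0,1,0,0,2,3),(0,0,1,0,0,3),(0,0,0,1,1,1),(0,0,0,0,3,2),(0,0,0,0,0,3)) and T = ((1,0,0,0,3,0),(2,1,0,0,1,3),(2,0,3,0,3,0),(3,0,3,1,1,3),(0,0,0,0,3,0),(0,0,0,0,2,3)). Then the additive subgroup {v ∈ (ℤ/4ℤ)⁶ | S²·v = v and T·v = v} is isomorphic as an abelian group to (ℤ/4ℤ)³; in particular it has exactly 64 elements. -/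
open Matrix in
lemma cons_val_five' {α : Type*} {m : ℕ} (x : α) (u : Fin (m+5) → α) :
    vecCons x u 5 = vecHead (vecTail (vecTail (vecTail (vecTail u)))) := rfl

set_option maxHeartbeats 2000000 in
set_option maxRecDepth 20000 in
set_option synthInstance.maxHeartbeats 1000000 in
set_option synthInstance.maxSize 2000 in
lemma mw_key_s11 (v : Fin 6 → ZMod 4) :
    (((!![1,0,0,0,2,1; 0,1,0,0,2,3; 0,0,1,0,0,3;
          0,0,0,1,1,1; 0,0,0,0,3,2; 0,0,0,0,0,3] : Matrix (Fin 6) (Fin 6) (ZMod 4)) ^ 2).mulVec v = v ∧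
     (!![1,0,0,0,3,0; 2,1,0,0,1,3; 2,0,3,0,3,0;
         3,0,3,1,1,3; 0,0,0,0,3,0; 0,0,0,0,2,3] : Matrix (Fin 6) (Fin 6) (ZMod 4)).mulVec v = v) ↔
    (v 2 = v 0 ∧ v 4 = 0 ∧ v 5 = 2 * v 0) := by
  simp [pow_two, Matrix.mulVec, dotProduct, Fin.sum_univ_six, funext_iff,
    Fin.forall_fin_succ, Matrix.mul_apply, cons_val_five',
    (show ((Fin.succ 2 : Fin 6)) = 3 from rfl),
    (show (((Fin.succ 2).succ : Fin 6)) = 4 from rfl),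
    (show (((Fin.succ 2).succ.succ : Fin 6)) = 5 from rfl)]
  generalize v 0 = a
  generalize v 1 = b
  generalize v 2 = c
  generalize v 3 = d
  generalize v 4 = e
  generalize v 5 = f
  revert a b c d e f
  decide

/-- For the matrices `S`, `T` over `ℤ/4ℤ` giving the Galois action of `σ`, `τ`,
the additive subgroup `{v | S²·v = v ∧ T·v = v}` of `(ℤ/4ℤ)⁶` (the Mordell–Weil
group of the Jacobian of the Fermat quartic over `ℚ(√2)`) is isomorphic to
`(ℤ/4ℤ)³`; in particular it has 64 elements. -/
theorem mordell_weil_fermat_quartic_Qsqrt2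
    (S T : Matrix (Fin 6) (Fin 6) (ZMod 4))
    (hS : S = !![1,0,0,0,2,1; 0,1,0,0,2,3; 0,0,1,0,0,3;
                 0,0,0,1,1,1; 0,0,0,0,3,2; 0,0,0,0,0,3])
    (hT : T = !![1,0,0,0,3,0; 2,1,0,0,1,3; 2,0,3,0,3,0;
                 3,0,3,1,1,3; 0,0,0,0,3,0; 0,0,0,0,2,3])
    (G : AddSubgroup (Fin 6 → ZMod 4))
    (hG : ∀ v, v ∈ G ↔ (S ^ 2).mulVec v = v ∧ T.mulVec v = v) :
    Nonempty (G ≃+ (Fin 3 → ZMod 4)) ∧ Nat.card G = 64 := by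
  subst hS hT
  have hmem : ∀ v, v ∈ G ↔ (v 2 = v 0 ∧ v 4 = 0 ∧ v 5 = 2 * v 0) :=
    fun v => (hG v).trans (mw_key_s11 v)
  have e : (Fin 3 → ZMod 4) ≃+ G := by
    refine
      { toFun := fun p => ⟨![p 0, p 1, p 0, p 2, 0, 2 * p 0], (hmem _).mpr ⟨rfl, rfl, rfl⟩⟩
        invFun := fun g => ![(g : Fin 6 → ZMod 4) 0, (g : Fin 6 → ZMod 4) 1,
          (g : Fin 6 → ZMod 4) 3]
        left_inv := fun p => ?_
        right_inv := fun g => ?_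
        map_add' := fun p q => ?_ }
    · funext i
      fin_cases i <;> rfl
    · obtain ⟨h2, h4, h5⟩ := (hmem _).mp g.2
      apply Subtype.ext
      funext i
      fin_cases i <;> simp_all <;> rfl
    · apply Subtype.ext
      funext i
      fin_cases i <;> simp [Matrix.cons_val_zero, Matrix.cons_val_one, cons_val_five'] <;> ring
  constructor
  · exact ⟨e.symm⟩
  · rw [Nat.card_congr e.toEquiv.symm]
    simp [Nat.card_eq_fintype_card]
end

section
/- Let S and T be the 6×6 matrices over ℤ/4ℤ with rows S = ((1,0,0,0,2,1),(0,1,0,0,2,3),(0,0,1,0,0,3),(0,0,0,1,1,1),(0,0,0,0,3,2),(0,0,0,0,0,3)) and T = ((1,0,0,0,3,0),(2,1,0,0,1,3),(2,0,3,0,3,0),(3,0,3,1,1,3),(0,0,0,0,3,0),(0,0,0,0,2,3)). Then the additive subgroup {v ∈ (ℤ/4ℤ)⁶ | S²·v = v and (T·S)·v = v} is isomorphic as an abelian group to (ℤ/4ℤ)³; in particular it has exactly 64 elements. -/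
set_option maxRecDepth 10000
set_option maxHeartbeats 1000000

private lemma key : ∀ (v : Fin 6 → ZMod 4),
    ((!![1,0,0,0,2,1; 0,1,0,0,2,3; 0,0,1,0,0,3;
        0,0,0,1,1,1; 0,0,0,0,3,2; 0,0,0,0,0,3] : Matrix (Fin 6) (Fin 6) (ZMod 4)) ^ 2).mulVec v = v ∧
    ((!![1,0,0,0,3,0; 2,1,0,0,1,3; 2,0,3,0,3,0;
        3,0,3,1,1,3; 0,0,0,0,3,0; 0,0,0,0,2,3] : Matrix (Fin 6) (Fin 6) (ZMod 4)) *
      !![1,0,0,0,2,1; 0,1,0,0,2,3; 0,0,1,0,0,3;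
        0,0,0,1,1,1; 0,0,0,0,3,2; 0,0,0,0,0,3]).mulVec v = v ↔
    (v 2 = 3 * v 0 ∧ v 4 = 2 * v 0 ∧ v 5 = 2 * v 0) := by
  intro v
  have h2 : (!![1,0,0,0,2,1; 0,1,0,0,2,3; 0,0,1,0,0,3;
        0,0,0,1,1,1; 0,0,0,0,3,2; 0,0,0,0,0,3] : Matrix (Fin 6) (Fin 6) (ZMod 4)) ^ 2 =
      !![1,0,0,0,0,0; 0,1,0,0,0,0; 0,0,1,0,0,0; 0,0,0,1,0,2; 0,0,0,0,1,0; 0,0,0,0,0,1] := by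
    rw [sq]; decide
  have h3 : ((!![1,0,0,0,3,0; 2,1,0,0,1,3; 2,0,3,0,3,0;
        3,0,3,1,1,3; 0,0,0,0,3,0; 0,0,0,0,2,3] : Matrix (Fin 6) (Fin 6) (ZMod 4)) *
      !![1,0,0,0,2,1; 0,1,0,0,2,3; 0,0,1,0,0,3;
        0,0,0,1,1,1; 0,0,0,0,3,2; 0,0,0,0,0,3]) =
      !![1,0,0,0,3,3; 2,1,0,0,1,0; 2,0,3,0,1,1; 3,0,3,1,2,0; 0,0,0,0,1,2; 0,0,0,0,2,1] := by
    decide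
  rw [h2, h3]
  have hv : v = ![v 0, v 1, v 2, v 3, v 4, v 5] := by
    funext i; fin_cases i <;> rfl
  rw [hv]
  generalize v 0 = a; generalize v 1 = b; generalize v 2 = c
  generalize v 3 = d; generalize v 4 = e; generalize v 5 = f
  simp only [Matrix.mulVec, dotProduct, Fin.sum_univ_six, funext_iff,
    Fin.forall_fin_succ, Fin.forall_fin_zero_pi, Matrix.cons_val', Matrix.cons_val_zero,
    Matrix.cons_val_one, Matrix.head_cons, Matrix.empty_val', Matrix.cons_val_fin_one,
    Matrix.cons_val_succ, Matrix.head_fin_const]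
  revert a b c d e f
  decide

/-- For the matrices `S`, `T` over `ℤ/4ℤ` giving the Galois action of `σ`, `τ`,
the additive subgroup `{v | S²·v = v ∧ (T·S)·v = v}` of `(ℤ/4ℤ)⁶` (the
Mordell–Weil group of the Jacobian of the Fermat quartic over `ℚ(√−2)`) is
isomorphic to `(ℤ/4ℤ)³`; in particular it has 64 elements. -/
theorem mordell_weil_fermat_quartic_Qsqrtneg2
    (S T : Matrix (Fin 6) (Fin 6) (ZMod 4))
    (hS : S = !![1,0,0,0,2,1; 0,1,0,0,2,3; 0,0,1,0,0,3;
                 0,0,0,1,1,1; 0,0,0,0,3,2; 0,0,0,0,0,3])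
    (hT : T = !![1,0,0,0,3,0; 2,1,0,0,1,3; 2,0,3,0,3,0;
                 3,0,3,1,1,3; 0,0,0,0,3,0; 0,0,0,0,2,3])
    (G : AddSubgroup (Fin 6 → ZMod 4))
    (hG : ∀ v, v ∈ G ↔ (S ^ 2).mulVec v = v ∧ (T * S).mulVec v = v) :
    Nonempty (G ≃+ (Fin 3 → ZMod 4)) ∧ Nat.card G = 64 := by
  subst hS hT
  have hG' : ∀ v, v ∈ G ↔ (v 2 = 3 * v 0 ∧ v 4 = 2 * v 0 ∧ v 5 = 2 * v 0) := by
    intro v; rw [hG v, key v]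
  -- build the equivalence
  have e : G ≃+ (Fin 3 → ZMod 4) := by
    refine AddEquiv.mk' ⟨fun x => ![x.1 0, x.1 1, x.1 3],
      fun w => ⟨![w 0, w 1, 3 * w 0, w 2, 2 * w 0, 2 * w 0], ?_⟩, ?_, ?_⟩ ?_
    · rw [hG']
      refine ⟨rfl, rfl, rfl⟩
    · rintro ⟨v, hv⟩
      rw [hG'] at hv
      obtain ⟨h2, h4, h5⟩ := hv
      ext i
      fin_cases i <;> first | rfl | exact h2.symm | exact h4.symm | exact h5.symm
    · intro w
      ext i
      fin_cases i <;> rfl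
    · rintro ⟨v, hv⟩ ⟨w, hw⟩
      ext i
      fin_cases i <;> rfl
  refine ⟨⟨e⟩, ?_⟩
  rw [Nat.card_congr e.toEquiv]
  simp [Nat.card_eq_fintype_card]
end

section
/- The polynomial X⁸ − 4X⁶ + 8X⁴ − 4X² + 1 is irreducible over ℚ, and every complex number δ with δ² = (2 − √2)(1 + i)/2 is a root of it; consequently, the minimal polynomial over ℚ of such a δ is X⁸ − 4X⁶ + 8X⁴ − 4X² + 1, and δ generates a field extension of ℚ of degree 8. -/
open Polynomial Complex Real IntermediateField

/-!
Substituting `X ↦ X + 1` turns `p = X⁸ − 4X⁶ + 8X⁴ − 4X² + 1` into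
`X⁸ + 8X⁷ + 24X⁶ + 32X⁵ + 18X⁴ + 8X³ + 12X² + 8X + 2`, which is Eisenstein at `2`; so `p` is
irreducible over `ℤ`, hence over `ℚ` by Gauss's lemma. Over `ℚ(i)` it factors as
`(X⁴ − 2(1 + i)X² + i)(X⁴ − 2(1 − i)X² − i)`, and `δ² = (2 − √2)(1 + i)/2` gives
`(δ² − (1 + i))² = i`, so `δ` is a root of the first factor. Being monic and irreducible, `p` is
the minimal polynomial of `δ`, and `[ℚ(δ) : ℚ] = deg p = 8`.
-/

theorem Polynomial.irreducible_comp_X_add_C_iff {R : Type*} [CommRing R] {f : R[X]} (r : R) :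
    Irreducible (f.comp (X + C r)) ↔ Irreducible f := by
  rw [← taylor_apply, ← coe_taylorEquiv]
  exact MulEquiv.irreducible_iff (taylorEquiv r)

noncomputable def deltaPoly (R : Type*) [CommRing R] : R[X] :=
  X ^ 8 - 4 * X ^ 6 + 8 * X ^ 4 - 4 * X ^ 2 + 1

theorem deltaPoly_comp_X_add_one (R : Type*) [CommRing R] :
    (deltaPoly R).comp (X + 1) =
      X ^ 8 + 8 * X ^ 7 + 24 * X ^ 6 + 32 * X ^ 5 + 18 * X ^ 4 + 8 * X ^ 3 + 12 * X ^ 2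
        + 8 * X + 2 := by
  simp only [deltaPoly, sub_comp, add_comp, mul_comp, pow_comp, X_comp, ofNat_comp, one_comp]
  ring

theorem monic_deltaPoly (R : Type*) [CommRing R] [Nontrivial R] : (deltaPoly R).Monic := by
  unfold deltaPoly; monicity!

theorem natDegree_deltaPoly (R : Type*) [CommRing R] [Nontrivial R] :
    (deltaPoly R).natDegree = 8 := by
  unfold deltaPoly; compute_degree!

theorem monic_deltaPoly_comp_X_add_one : ((deltaPoly ℤ).comp (X + 1)).Monic := by
  rw [deltaPoly_comp_X_add_one]; monicity!

theorem natDegree_deltaPoly_comp_X_add_one : ((deltaPoly ℤ).comp (X + 1)).natDegree = 8 := by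
  rw [deltaPoly_comp_X_add_one]; compute_degree!

theorem deltaPoly_comp_X_add_one_isEisensteinAt :
    ((deltaPoly ℤ).comp (X + 1)).IsEisensteinAt (Submodule.span ℤ {2}) := by
  refine monic_deltaPoly_comp_X_add_one.isEisensteinAt_of_mem_of_notMem
    (Ideal.span_singleton_prime two_ne_zero |>.mpr Int.prime_two).ne_top (fun {n} hn => ?_) ?_
  · rw [natDegree_deltaPoly_comp_X_add_one] at hn
    rw [deltaPoly_comp_X_add_one]
    interval_cases n <;> simp [coeff_X, Ideal.mem_span_singleton]
  · rw [deltaPoly_comp_X_add_one, Ideal.submodule_span_eq, Ideal.span_singleton_pow,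
      Ideal.mem_span_singleton]
    simp

theorem irreducible_deltaPoly_int : Irreducible (deltaPoly ℤ) := by
  rw [← irreducible_comp_X_add_C_iff 1, C_1]
  refine deltaPoly_comp_X_add_one_isEisensteinAt.irreducible
    ((Ideal.span_singleton_prime two_ne_zero).mpr Int.prime_two)
    monic_deltaPoly_comp_X_add_one.isPrimitive
    (by rw [natDegree_deltaPoly_comp_X_add_one]; norm_num)

theorem map_deltaPoly {R S : Type*} [CommRing R] [CommRing S] (f : R →+* S) :
    (deltaPoly R).map f = deltaPoly S := by
  simp [deltaPoly]

theorem irreducible_deltaPoly : Irreducible (deltaPoly ℚ) := by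
  rw [← map_deltaPoly (Int.castRingHom ℚ),
    ← IsPrimitive.Int.irreducible_iff_irreducible_map_cast (monic_deltaPoly ℤ).isPrimitive]
  exact irreducible_deltaPoly_int

theorem aeval_deltaPoly_eq_zero {R A : Type*} [CommRing R] [CommRing A] [Algebra R A] {ι δ : A}
    (hι : ι ^ 2 = -1) (hδ : (δ ^ 2 - (1 + ι)) ^ 2 = ι) : aeval δ (deltaPoly R) = 0 := by
  simp only [deltaPoly, map_add, map_sub, map_mul, map_pow, aeval_X, map_ofNat, map_one]
  linear_combination (δ ^ 4 - 2 * (1 - ι) * δ ^ 2 - ι) * hδ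
    + ((1 - 2 * δ ^ 2) ^ 2 - (δ ^ 4 - 2 * (1 - ι) * δ ^ 2 - ι)) * hι

theorem sq_sub_one_add_I_sq {δ : ℂ} (hδ : δ ^ 2 = (2 - (Real.sqrt 2 : ℂ)) * (1 + I) / 2) :
    (δ ^ 2 - (1 + I)) ^ 2 = I := by
  have hsqrt : (Real.sqrt 2 : ℂ) ^ 2 = 2 := by exact_mod_cast Real.sq_sqrt zero_le_two
  rw [hδ]
  linear_combination (1 + I) ^ 2 / 4 * hsqrt + I_sq / 2

/-- The polynomial `X⁸ − 4X⁶ + 8X⁴ − 4X² + 1` is irreducible over `ℚ`, and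
every `δ ∈ ℂ` with `δ² = (2 − √2)(1 + i)/2` is a root of it; consequently the
minimal polynomial of such a `δ` over `ℚ` is this polynomial, and `δ` generates
a field extension of `ℚ` of degree 8. -/
theorem minpoly_delta_degree_eight :
    letI p : Polynomial ℚ := X ^ 8 - 4 * X ^ 6 + 8 * X ^ 4 - 4 * X ^ 2 + 1
    Irreducible p ∧
      ∀ δ : ℂ, δ ^ 2 = (2 - (Real.sqrt 2 : ℂ)) * (1 + Complex.I) / 2 →
        Polynomial.aeval δ p = 0 ∧ minpoly ℚ δ = p ∧
          Module.finrank ℚ ℚ⟮δ⟯ = 8 := by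
  change Irreducible (deltaPoly ℚ) ∧ ∀ δ : ℂ, _ → aeval δ (deltaPoly ℚ) = 0 ∧
    minpoly ℚ δ = deltaPoly ℚ ∧ _
  refine ⟨irreducible_deltaPoly, fun δ hδ => ?_⟩
  have hroot : aeval δ (deltaPoly ℚ) = 0 := aeval_deltaPoly_eq_zero I_sq (sq_sub_one_add_I_sq hδ)
  have hmin : minpoly ℚ δ = deltaPoly ℚ :=
    (minpoly.eq_of_irreducible_of_monic irreducible_deltaPoly hroot (monic_deltaPoly ℚ)).symm
  have hint : IsIntegral ℚ δ := ⟨deltaPoly ℚ, monic_deltaPoly ℚ, hroot⟩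
  rw [adjoin.finrank hint, hmin, natDegree_deltaPoly]
  exact ⟨hroot, rfl, rfl⟩
end
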